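/- arXiv:1510.07919 — 2 statements merged into one kernel-verified Lean document; each statement's English description precedes it below -/
import Mathlib

section
/- Let N be a near polygon with exactly three points on every line, let f1 and f2 be neighboring valuations of N, and let ε ∈ {−1,0,1} satisfy |f1(x) − f2(x) + ε| ≤ 1 for all points x. Define f3'(x) = f1(x) − 1 for points x with f1(x) = f2(x) − ε and f3'(x) = max{f1(x), f2(x) − ε} for all other points x. Then f3' is a semi-valuation of N; consequently, the function x ↦ f3'(x) − m, where m is the minimum value attained by f3', is a valuation of N. -/
/-- The collinearity graph of a point-line geometry whose lines are given as
sets of points: two points are adjacent when they are distinct and lie on a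
common line. -/
def collGraph {P : Type*} (Lines : Set (Set P)) : SimpleGraph P where
  Adj x y := x ≠ y ∧ ∃ L ∈ Lines, x ∈ L ∧ y ∈ L
  symm := by
    refine ⟨?_⟩
    rintro x y ⟨hxy, L, hL, hx, hy⟩
    exact ⟨hxy.symm, L, hL, hy, hx⟩
  loopless := by
    refine ⟨?_⟩
    rintro x ⟨h, -⟩
    exact h rfl

/-- A near `2d`-gon: a partial linear space (every line carries at least two
points, two distinct points lie on at most one common line) whose collinearity
graph is connected of diameter `d`, and in which for every point `x` and every
line `L` there is a unique point of `L` nearest to `x`.  A near hexagon is a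
`NearPolygon P 3`, a near octagon is a `NearPolygon P 4`. -/
structure NearPolygon (P : Type*) (d : ℕ) where
  Lines : Set (Set P)
  two_pts : ∀ L ∈ Lines, ∃ x ∈ L, ∃ y ∈ L, x ≠ y
  unique_line : ∀ L₁ ∈ Lines, ∀ L₂ ∈ Lines, ∀ x y : P,
    x ≠ y → x ∈ L₁ → y ∈ L₁ → x ∈ L₂ → y ∈ L₂ → L₁ = L₂
  connected : (collGraph Lines).Connected
  diam_le : ∀ x y : P, (collGraph Lines).dist x y ≤ d
  diam_eq : ∃ x y : P, (collGraph Lines).dist x y = d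
  near : ∀ (x : P), ∀ L ∈ Lines, ∃! y, y ∈ L ∧
    ∀ z ∈ L, (collGraph Lines).dist x y ≤ (collGraph Lines).dist x z

/-- A near polygon has order `(s,t)` if every line is incident with exactly
`s+1` points and every point is incident with exactly `t+1` lines. -/
def NearPolygon.hasOrder {P : Type*} {d : ℕ} (N : NearPolygon P d) (s t : ℕ) : Prop :=
  (∀ L ∈ N.Lines, L.ncard = s + 1) ∧
  (∀ x : P, {L | L ∈ N.Lines ∧ x ∈ L}.ncard = t + 1)

/-- A semi-valuation: every line `L` contains a unique point `xL` such that
every other point of `L` has value `f xL + 1`. -/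
def IsSemiValuation {P : Type*} (Lines : Set (Set P)) (f : P → ℤ) : Prop :=
  ∀ L ∈ Lines, ∃! xL, xL ∈ L ∧ ∀ x ∈ L, x ≠ xL → f x = f xL + 1

/-- A valuation: a semi-valuation whose minimum value is `0`. -/
def IsValuation {P : Type*} (Lines : Set (Set P)) (f : P → ℤ) : Prop :=
  IsSemiValuation Lines f ∧ (∀ x, 0 ≤ f x) ∧ (∃ x, f x = 0)

/-- `ι` realizes the geometry with lines `LQ` as a full isometrically embedded
subgeometry of the geometry with lines `LP` (lines being identified with their
point sets, fullness amounts to lines mapping onto lines). -/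
structure IsFullIsomEmb {Q P : Type*} (LQ : Set (Set Q)) (LP : Set (Set P))
    (ι : Q → P) : Prop where
  inj : Function.Injective ι
  line_map : ∀ L ∈ LQ, ι '' L ∈ LP
  isometric : ∀ x y : Q, (collGraph LP).dist (ι x) (ι y) = (collGraph LQ).dist x y

/-- The distance `d(x, P)` from a point `x` of the ambient geometry to the
point set of the embedded subgeometry. -/
noncomputable def distToSub {Q P : Type*} (LP : Set (Set P)) (ι : Q → P) (x : P) : ℕ :=
  sInf (Set.range fun z : Q => (collGraph LP).dist x (ι z))

/-- The function `f_x : y ↦ d(x, y) - d(x, P)` induced on the embedded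
subgeometry by a point `x` of the ambient geometry. -/
noncomputable def inducedVal {Q P : Type*} (LP : Set (Set P)) (ι : Q → P) (x : P) :
    Q → ℤ :=
  fun y => ((collGraph LP).dist x (ι y) : ℤ) - (distToSub LP ι x : ℤ)

/-- Two valuations are neighboring if `|f1 x - f2 x + ε| ≤ 1` for all `x`,
for some integer `ε`. -/
def Neighboring {P : Type*} (f1 f2 : P → ℤ) : Prop :=
  ∃ ε : ℤ, ∀ x, |f1 x - f2 x + ε| ≤ 1

/-- The semi-valuation `f3'` built from two neighboring valuations `f1, f2`
and a compatible `ε`. -/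
def starFun {P : Type*} (f1 f2 : P → ℤ) (ε : ℤ) (x : P) : ℤ :=
  if f1 x = f2 x - ε then f1 x - 1 else max (f1 x) (f2 x - ε)

/-- `StarRel f1 f2 f3` expresses `f1 * f2 = f3`: some `ε ∈ {-1,0,1}` witnesses
that `f1` and `f2` are neighboring, and, for every such `ε`, subtracting the
minimum value `m` of `f3' = starFun f1 f2 ε` from `f3'` yields `f3`. -/
def StarRel {P : Type*} (f1 f2 f3 : P → ℤ) : Prop :=
  (∃ ε ∈ ({-1, 0, 1} : Set ℤ), ∀ x, |f1 x - f2 x + ε| ≤ 1) ∧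
  ∀ ε ∈ ({-1, 0, 1} : Set ℤ), (∀ x, |f1 x - f2 x + ε| ≤ 1) →
    ∃ m : ℤ, IsLeast (Set.range (starFun f1 f2 ε)) m ∧
      ∀ x, f3 x = starFun f1 f2 ε x - m

/-- A subspace: together with two distinct collinear points it contains every
line through them. -/
def IsSubspace {P : Type*} (Lines : Set (Set P)) (X : Set P) : Prop :=
  ∀ L ∈ Lines, ∀ x ∈ L, ∀ y ∈ L, x ≠ y → x ∈ X → y ∈ X → L ⊆ X

/-- A convex subspace: a subspace containing every point on a shortest path
between any two of its points. -/
def IsConvexSubspace {P : Type*} (Lines : Set (Set P)) (X : Set P) : Prop :=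
  IsSubspace Lines X ∧
  ∀ x ∈ X, ∀ y ∈ X, ∀ z : P,
    (collGraph Lines).dist x z + (collGraph Lines).dist z y
      = (collGraph Lines).dist x y → z ∈ X

/-- A quad: a convex subspace of diameter `2` inducing (with the lines fully
contained in it) a nondegenerate generalized quadrangle. -/
def IsQuad {P : Type*} (Lines : Set (Set P)) (Q : Set P) : Prop :=
  IsConvexSubspace Lines Q ∧
  (∀ x ∈ Q, ∀ y ∈ Q, (collGraph Lines).dist x y ≤ 2) ∧
  (∃ x ∈ Q, ∃ y ∈ Q, (collGraph Lines).dist x y = 2) ∧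
  (∀ x ∈ Q, ∀ L ∈ Lines, L ⊆ Q → x ∉ L →
    ∃! y, y ∈ L ∧ (collGraph Lines).Adj x y) ∧
  (∀ x ∈ Q, ∃ L₁ ∈ Lines, ∃ L₂ ∈ Lines,
    L₁ ⊆ Q ∧ L₂ ⊆ Q ∧ x ∈ L₁ ∧ x ∈ L₂ ∧ L₁ ≠ L₂) ∧
  (∃ x ∈ Q, ∃ y ∈ Q, x ≠ y ∧ ¬ (collGraph Lines).Adj x y)

/-- A quad has order `(s,t')` if each of its lines has `s+1` points and each
of its points is on exactly `t'+1` lines contained in the quad. -/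
def QuadHasOrder {P : Type*} (Lines : Set (Set P)) (Q : Set P) (s t' : ℕ) : Prop :=
  (∀ L ∈ Lines, L ⊆ Q → L.ncard = s + 1) ∧
  (∀ x ∈ Q, {L | L ∈ Lines ∧ L ⊆ Q ∧ x ∈ L}.ncard = t' + 1)

/-!
On a line `{a, b, c}` let `a` and `b` be the points where `f1` and `f2` are smallest. If `a = b`,
then `f1` and `f2` both grow by one off `a`, and so does `f3'`. Otherwise the bound
`|f1 - f2 + ε| ≤ 1` at `a` and at `b` forces `f1 a = f2 b - ε`; then `c` is the only point of the
line with `f1 = f2 - ε`, so `f3' c = f1 a` while `f3'` equals `f1 a + 1` at `a` and `b`.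
Since `f1 ≥ 0` we have `f3' ≥ -1`, so `f3'` attains a minimum and can be normalised.
-/

theorem Set.exists_eq_insert_pair_of_ncard_eq_three {α : Type*} {s : Set α} {a b : α}
    (hs : s.ncard = 3) (ha : a ∈ s) (hb : b ∈ s) (hab : a ≠ b) :
    ∃ c, c ≠ a ∧ c ≠ b ∧ s = {a, b, c} := by
  have hpair : {a, b} ⊆ s := Set.insert_subset ha (Set.singleton_subset_iff.mpr hb)
  obtain ⟨c, hc⟩ : ∃ c, s \ {a, b} = {c} := by
    rw [← Set.ncard_eq_one, Set.ncard_sdiff hpair, hs, Set.ncard_pair hab]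
  have hcs : c ∈ s \ {a, b} := hc ▸ rfl
  simp only [Set.mem_sdiff, Set.mem_insert_iff, Set.mem_singleton_iff, not_or] at hcs
  refine ⟨c, hcs.2.1, hcs.2.2, ?_⟩
  rw [← Set.union_sdiff_cancel hpair, hc, Set.insert_union, Set.singleton_union]

theorem Int.exists_isLeast_of_bddBelow {s : Set ℤ} (hne : s.Nonempty) (hbdd : BddBelow s) :
    ∃ m, IsLeast s m :=
  ⟨sInf s, Int.csInf_mem hne hbdd, fun _ hx => csInf_le hbdd hx⟩

section SemiValuation

variable {P : Type*} {Lines : Set (Set P)} {f : P → ℤ}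

theorem isSemiValuation_of_exists
    (h : ∀ L ∈ Lines, ∃ xL ∈ L, ∀ x ∈ L, x ≠ xL → f x = f xL + 1) :
    IsSemiValuation Lines f := by
  intro L hL
  obtain ⟨xL, hxL, hval⟩ := h L hL
  refine ⟨xL, ⟨hxL, hval⟩, fun y ⟨hy, hyval⟩ => ?_⟩
  by_contra hne
  have := hval y hy hne
  have := hyval xL hxL (Ne.symm hne)
  omega

theorem IsSemiValuation.sub_const (hf : IsSemiValuation Lines f) (c : ℤ) :
    IsSemiValuation Lines (fun x => f x - c) :=
  isSemiValuation_of_exists fun L hL =>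
    let ⟨xL, ⟨hxL, hval⟩, _⟩ := hf L hL
    ⟨xL, hxL, fun x hx hne => by simp only [hval x hx hne]; ring⟩

theorem IsSemiValuation.isValuation_sub {m : ℤ} (hf : IsSemiValuation Lines f)
    (hm : IsLeast (Set.range f) m) : IsValuation Lines (fun x => f x - m) := by
  obtain ⟨⟨x₀, hx₀⟩, hlow⟩ := hm
  exact ⟨hf.sub_const m, fun x => sub_nonneg.mpr (hlow ⟨x, rfl⟩), x₀, sub_eq_zero.mpr hx₀⟩

end SemiValuation

section StarFun

variable {P : Type*} {f1 f2 : P → ℤ} {ε : ℤ}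

theorem neg_one_le_starFun (hf1 : ∀ x, 0 ≤ f1 x) (x : P) : -1 ≤ starFun f1 f2 ε x := by
  have := hf1 x
  unfold starFun
  split_ifs <;> omega

theorem starFun_eq_add_one_of_eq_add_one {x y : P} (h1 : f1 x = f1 y + 1)
    (h2 : f2 x = f2 y + 1) : starFun f1 f2 ε x = starFun f1 f2 ε y + 1 := by
  unfold starFun
  split_ifs <;> omega

theorem starFun_eq_add_one_of_distinct_minima {a b c : P}
    (ha : |f1 a - f2 a + ε| ≤ 1) (hb : |f1 b - f2 b + ε| ≤ 1)
    (h1b : f1 b = f1 a + 1) (h1c : f1 c = f1 a + 1)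
    (h2a : f2 a = f2 b + 1) (h2c : f2 c = f2 b + 1) :
    starFun f1 f2 ε a = starFun f1 f2 ε c + 1 ∧ starFun f1 f2 ε b = starFun f1 f2 ε c + 1 := by
  have := abs_le.mp ha
  have := abs_le.mp hb
  unfold starFun
  split_ifs <;> omega

theorem isSemiValuation_starFun {Lines : Set (Set P)} (h3 : ∀ L ∈ Lines, L.ncard = 3)
    (hf1 : IsSemiValuation Lines f1) (hf2 : IsSemiValuation Lines f2)
    (hb : ∀ x, |f1 x - f2 x + ε| ≤ 1) : IsSemiValuation Lines (starFun f1 f2 ε) := by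
  refine isSemiValuation_of_exists fun L hL => ?_
  obtain ⟨a, ⟨haL, h1⟩, -⟩ := hf1 L hL
  obtain ⟨b, ⟨hbL, h2⟩, -⟩ := hf2 L hL
  by_cases hab : a = b
  · subst hab
    exact ⟨a, haL, fun x hx hne => starFun_eq_add_one_of_eq_add_one (h1 x hx hne) (h2 x hx hne)⟩
  obtain ⟨c, hca, hcb, rfl⟩ :=
    Set.exists_eq_insert_pair_of_ncard_eq_three (h3 L hL) haL hbL hab
  have hcL : c ∈ ({a, b, c} : Set P) := by simp
  obtain ⟨hsa, hsb⟩ := starFun_eq_add_one_of_distinct_minima (hb a) (hb b)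
    (h1 b hbL (Ne.symm hab)) (h1 c hcL hca) (h2 a haL hab) (h2 c hcL hcb)
  refine ⟨c, hcL, ?_⟩
  rintro x (rfl | rfl | rfl) hne
  exacts [hsa, hsb, absurd rfl hne]

end StarFun

theorem starFun_semivaluation_general {P : Type*} {d : ℕ} (N : NearPolygon P d)
    (h3 : ∀ L ∈ N.Lines, L.ncard = 3)
    (f1 f2 : P → ℤ) (hf1 : IsValuation N.Lines f1) (hf2 : IsValuation N.Lines f2)
    (ε : ℤ)
    (hb : ∀ x, |f1 x - f2 x + ε| ≤ 1) :
    IsSemiValuation N.Lines (starFun f1 f2 ε) ∧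
      ∃ m : ℤ, IsLeast (Set.range (starFun f1 f2 ε)) m ∧
        IsValuation N.Lines (fun x => starFun f1 f2 ε x - m) := by
  have hsemi := isSemiValuation_starFun h3 hf1.1 hf2.1 hb
  obtain ⟨x₀, -⟩ := hf1.2.2
  obtain ⟨m, hm⟩ := Int.exists_isLeast_of_bddBelow ⟨_, Set.mem_range_self x₀⟩
    ⟨-1, Set.forall_mem_range.mpr (neg_one_le_starFun hf1.2.1)⟩
  exact ⟨hsemi, m, hm, hsemi.isValuation_sub hm⟩

/-- Let `N` be a near polygon with exactly three points on each
line, let `f1, f2` be neighboring valuations of `N` with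
`ε ∈ {-1,0,1}` satisfying `|f1 x - f2 x + ε| ≤ 1` for all `x`.  Then
`f3' = starFun f1 f2 ε` is a semi-valuation of `N`, and subtracting its
minimum value `m` yields a valuation of `N`. -/
theorem starFun_semivaluation {P : Type*} {d : ℕ} (N : NearPolygon P d)
    (h3 : ∀ L ∈ N.Lines, L.ncard = 3)
    (f1 f2 : P → ℤ) (hf1 : IsValuation N.Lines f1) (hf2 : IsValuation N.Lines f2)
    (ε : ℤ) (hε : ε ∈ ({-1, 0, 1} : Set ℤ))
    (hb : ∀ x, |f1 x - f2 x + ε| ≤ 1) :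
    IsSemiValuation N.Lines (starFun f1 f2 ε) ∧
      ∃ m : ℤ, IsLeast (Set.range (starFun f1 f2 ε)) m ∧
        IsValuation N.Lines (fun x => starFun f1 f2 ε x - m) :=
  starFun_semivaluation_general N h3 f1 f2 hf1 hf2 ε hb
end

section
/- Every quad of a near hexagon of order (2,2) is a grid-quad, i.e., has order (2,1). -/
/-!
Call a point of `Q` full if every line through it lies in `Q`. For non-collinear points
`x, y` of a quad, sending a line `L` of `Q` through `x` to the line joining `y` to its
unique neighbour on `L` is injective, so as every point is on `t + 1` lines, fullness passes
between non-collinear points of `Q`. Since lines are thick, two collinear points of `Q` have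
a common non-collinear point in `Q`, so fullness also passes along lines, and by
connectedness a single full point would force `Q` to be everything, against diameter `3`.
Hence a point of `Q` lies on at most two lines of `Q`, and on at least two because `Q` is a
nondegenerate quadrangle.
-/

section QuadsAreGrids

variable {P : Type*}

def linesThrough (Lines : Set (Set P)) (x : P) : Set (Set P) :=
  {L | L ∈ Lines ∧ x ∈ L}

def linesIn (Lines : Set (Set P)) (Q : Set P) (x : P) : Set (Set P) :=
  {L | L ∈ Lines ∧ L ⊆ Q ∧ x ∈ L}

def IsFull (Lines : Set (Set P)) (Q : Set P) (x : P) : Prop :=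
  ∀ L ∈ Lines, x ∈ L → L ⊆ Q

theorem linesIn_subset_linesThrough (Lines : Set (Set P)) (Q : Set P) (x : P) :
    linesIn Lines Q x ⊆ linesThrough Lines x :=
  fun _ hL => ⟨hL.1, hL.2.2⟩

theorem exists_mem_ne_ne_of_two_lt_ncard {L : Set P} (hL : 2 < L.ncard) (a b : P) :
    ∃ c ∈ L, c ≠ a ∧ c ≠ b := by
  obtain ⟨c, hcL, hc⟩ := Set.exists_mem_notMem_of_ncard_lt_ncard
    (lt_of_le_of_lt (Set.ncard_insert_le a {b}) (by simpa using hL))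
  simp only [Set.mem_insert_iff, Set.mem_singleton_iff, not_or] at hc
  exact ⟨c, hcL, hc⟩

namespace NearPolygon

variable {d : ℕ} (N : NearPolygon P d)

theorem eq_of_dist_eq_zero {x y : P} (h : (collGraph N.Lines).dist x y = 0) : x = y :=
  N.connected.dist_eq_zero_iff.mp h

theorem exists_mem_ne {L : Set P} (hL : L ∈ N.Lines) (a : P) : ∃ b ∈ L, b ≠ a := by
  obtain ⟨x, hx, y, hy, hxy⟩ := N.two_pts L hL
  by_cases hxa : x = a
  · exact ⟨y, hy, hxa ▸ hxy.symm⟩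
  · exact ⟨x, hx, hxa⟩

theorem eq_of_adj_of_adj {x : P} {L : Set P} (hL : L ∈ N.Lines) (hx : x ∉ L)
    {y z : P} (hy : y ∈ L) (hz : z ∈ L)
    (hxy : (collGraph N.Lines).Adj x y) (hxz : (collGraph N.Lines).Adj x z) : y = z := by
  obtain ⟨w, -, hw⟩ := N.near x L hL
  have nearest : ∀ u ∈ L, (collGraph N.Lines).Adj x u →
      ∀ v ∈ L, (collGraph N.Lines).dist x u ≤ (collGraph N.Lines).dist x v := by
    intro u _ hxu v hv
    have hv0 : (collGraph N.Lines).dist x v ≠ 0 := fun h => hx (N.eq_of_dist_eq_zero h ▸ hv)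
    rw [SimpleGraph.dist_eq_one_iff_adj.mpr hxu]
    omega
  exact (hw y ⟨hy, nearest y hy hxy⟩).trans (hw z ⟨hz, nearest z hz hxz⟩).symm

end NearPolygon

namespace IsQuad

variable {d : ℕ} {N : NearPolygon P d} {Q : Set P}

theorem exists_line_ne (hQ : IsQuad N.Lines Q) {x : P} (hx : x ∈ Q) (K : Set P) :
    ∃ L ∈ N.Lines, L ⊆ Q ∧ x ∈ L ∧ L ≠ K := by
  obtain ⟨L₁, hL₁, L₂, hL₂, hL₁Q, hL₂Q, hxL₁, hxL₂, hL₁₂⟩ := hQ.2.2.2.2.1 x hx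
  by_cases hK : L₁ = K
  · exact ⟨L₂, hL₂, hL₂Q, hxL₂, fun h => hL₁₂ (hK.trans h.symm)⟩
  · exact ⟨L₁, hL₁, hL₁Q, hxL₁, hK⟩

theorem two_le_ncard_linesIn (hQ : IsQuad N.Lines Q) {x : P} (hx : x ∈ Q)
    (hfin : (linesIn N.Lines Q x).Finite) :
    2 ≤ (linesIn N.Lines Q x).ncard := by
  obtain ⟨L₁, hL₁, L₂, hL₂, hL₁Q, hL₂Q, hxL₁, hxL₂, hL₁₂⟩ := hQ.2.2.2.2.1 x hx
  rw [← Set.ncard_pair hL₁₂]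
  refine Set.ncard_le_ncard ?_ hfin
  rintro L (rfl | rfl)
  exacts [⟨hL₁, hL₁Q, hxL₁⟩, ⟨hL₂, hL₂Q, hxL₂⟩]

theorem exists_line_meeting (hQ : IsQuad N.Lines Q) {y : P} (hy : y ∈ Q) {L : Set P}
    (hL : L ∈ N.Lines) (hLQ : L ⊆ Q) (hyL : y ∉ L) :
    ∃ M ∈ linesIn N.Lines Q y, ∃ z ∈ L, z ∈ M ∧ (collGraph N.Lines).Adj y z := by
  obtain ⟨z, ⟨hzL, hyz⟩, -⟩ := hQ.2.2.2.1 y hy L hL hLQ hyL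
  obtain ⟨M, hM, hyM, hzM⟩ := hyz.2
  exact ⟨M, ⟨hM, hQ.1.1 M hM y hyM z hzM hyz.1 hy (hLQ hzL), hyM⟩, z, hzL, hzM, hyz⟩

theorem ncard_linesIn_le (hQ : IsQuad N.Lines Q) {x y : P} (hy : y ∈ Q) (hxy : x ≠ y)
    (hnadj : ¬ (collGraph N.Lines).Adj x y) (hfin : (linesIn N.Lines Q y).Finite) :
    (linesIn N.Lines Q x).ncard ≤ (linesIn N.Lines Q y).ncard := by
  have meeting : ∀ L, ∃ M, L ∈ linesIn N.Lines Q x →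
      M ∈ linesIn N.Lines Q y ∧ ∃ z ∈ L, z ∈ M ∧ (collGraph N.Lines).Adj x z := by
    intro L
    by_cases hL : L ∈ linesIn N.Lines Q x
    · obtain ⟨hL, hLQ, hxL⟩ := hL
      have hyL : y ∉ L := fun hyL => hnadj ⟨hxy, L, hL, hxL, hyL⟩
      obtain ⟨M, hM, z, hzL, hzM, hyz⟩ := hQ.exists_line_meeting hy hL hLQ hyL
      have hxz : x ≠ z := by rintro rfl; exact hnadj hyz.symm
      exact ⟨M, fun _ => ⟨hM, z, hzL, hzM, hxz, L, hL, hxL, hzL⟩⟩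
    · exact ⟨∅, fun h => absurd h hL⟩
  choose f hf using meeting
  refine Set.ncard_le_ncard_of_injOn f (fun L hL => (hf L hL).1) ?_ hfin
  intro L hL L' hL' hLL'
  obtain ⟨⟨hM, -, hyM⟩, z, hzL, hzM, hxz⟩ := hf L hL
  obtain ⟨-, z', hz'L', hz'M, hxz'⟩ := hf L' hL'
  have hxM : x ∉ f L := fun hxM => hnadj ⟨hxy, f L, hM, hxM, hyM⟩
  have hzz' : z = z' := N.eq_of_adj_of_adj hM hxM hzM (hLL' ▸ hz'M) hxz hxz'
  exact N.unique_line L hL.1 L' hL'.1 x z hxz.1 hL.2.2 hzL hL'.2.2 (hzz' ▸ hz'L')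

theorem full_of_full_of_not_adj (hQ : IsQuad N.Lines Q) {t : ℕ}
    (ht : ∀ z, (linesThrough N.Lines z).ncard = t + 1) {x y : P}
    (hfull : IsFull N.Lines Q x) (hy : y ∈ Q) (hxy : x ≠ y)
    (hnadj : ¬ (collGraph N.Lines).Adj x y) :
    IsFull N.Lines Q y := by
  have hfin : (linesThrough N.Lines y).Finite :=
    Set.finite_of_ncard_ne_zero (by rw [ht]; omega)
  have hx_eq : linesIn N.Lines Q x = linesThrough N.Lines x :=
    (linesIn_subset_linesThrough _ _ _).antisymm fun L hL => ⟨hL.1, hfull L hL.1 hL.2, hL.2⟩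
  have hy_eq : linesIn N.Lines Q y = linesThrough N.Lines y := by
    refine Set.eq_of_subset_of_ncard_le (linesIn_subset_linesThrough _ _ _) ?_ hfin
    calc (linesThrough N.Lines y).ncard
        = (linesIn N.Lines Q x).ncard := by rw [hx_eq, ht, ht]
      _ ≤ (linesIn N.Lines Q y).ncard :=
        hQ.ncard_linesIn_le hy hxy hnadj (hfin.subset (linesIn_subset_linesThrough _ _ _))
  intro L hL hyL
  have hL' : L ∈ linesIn N.Lines Q y := hy_eq ▸ (⟨hL, hyL⟩ : L ∈ linesThrough N.Lines y)
  exact hL'.2.1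

theorem exists_not_adj_of_adj (hQ : IsQuad N.Lines Q) (hthick : ∀ L ∈ N.Lines, 2 < L.ncard)
    {x y : P} (hx : x ∈ Q) (hy : y ∈ Q)
    (hxy : (collGraph N.Lines).Adj x y) :
    ∃ v ∈ Q, v ≠ x ∧ ¬ (collGraph N.Lines).Adj x v ∧ v ≠ y ∧ ¬ (collGraph N.Lines).Adj y v := by
  obtain ⟨hxy_ne, L, hL, hxL, hyL⟩ := hxy
  obtain ⟨L', hL', hL'Q, hxL', hL'L⟩ := hQ.exists_line_ne hx L
  obtain ⟨p, hpL', hpx⟩ := N.exists_mem_ne hL' x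
  have hxp : (collGraph N.Lines).Adj x p := ⟨hpx.symm, L', hL', hxL', hpL'⟩
  have hyL' : y ∉ L' := fun hyL' => hL'L (N.unique_line L' hL' L hL x y hxy_ne hxL' hyL' hxL hyL)
  have hyp : ¬ (collGraph N.Lines).Adj y p := fun hyp =>
    hpx (N.eq_of_adj_of_adj hL' hyL' hpL' hxL' hyp ⟨hxy_ne.symm, L, hL, hyL, hxL⟩)
  obtain ⟨M, hM, hMQ, hpM, hML'⟩ := hQ.exists_line_ne (hL'Q hpL') L'
  have hxM : x ∉ M := fun hxM =>
    hML' (N.unique_line M hM L' hL' x p hxp.1 hxM hpM hxL' hpL')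
  have hyM : y ∉ M := fun hyM => hyp ⟨fun h => hyL' (h ▸ hpL'), M, hM, hyM, hpM⟩
  obtain ⟨u, -, hu⟩ := hQ.2.2.2.1 y hy M hM hMQ hyM
  obtain ⟨v, hvM, hvp, hvu⟩ := exists_mem_ne_ne_of_two_lt_ncard (hthick M hM) p u
  exact ⟨v, hMQ hvM, fun h => hxM (h ▸ hvM),
    fun hxv => hvp (N.eq_of_adj_of_adj hM hxM hvM hpM hxv hxp),
    fun h => hyM (h ▸ hvM), fun hyv => hvu (hu v ⟨hvM, hyv⟩)⟩

theorem full_of_full_of_adj (hQ : IsQuad N.Lines Q) {t : ℕ}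
    (ht : ∀ z, (linesThrough N.Lines z).ncard = t + 1) (hthick : ∀ L ∈ N.Lines, 2 < L.ncard)
    {x y : P} (hx : x ∈ Q) (hfull : IsFull N.Lines Q x)
    (hxy : (collGraph N.Lines).Adj x y) :
    y ∈ Q ∧ IsFull N.Lines Q y := by
  have hy : y ∈ Q := by
    obtain ⟨-, L, hL, hxL, hyL⟩ := hxy
    exact hfull L hL hxL hyL
  obtain ⟨v, hv, hvx, hxv, hvy, hyv⟩ := hQ.exists_not_adj_of_adj hthick hx hy hxy
  have hfull_v := hQ.full_of_full_of_not_adj ht hfull hv hvx.symm hxv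
  exact ⟨hy, hQ.full_of_full_of_not_adj ht hfull_v hy hvy fun h => hyv h.symm⟩

theorem exists_line_not_subset (hQ : IsQuad N.Lines Q) (hd : 2 < d) {t : ℕ}
    (ht : ∀ z, (linesThrough N.Lines z).ncard = t + 1) (hthick : ∀ L ∈ N.Lines, 2 < L.ncard)
    {x : P} (hx : x ∈ Q) :
    ∃ L ∈ N.Lines, x ∈ L ∧ ¬ L ⊆ Q := by
  by_contra! hfull
  have propagate : ∀ a b, (collGraph N.Lines).Walk a b →
      a ∈ Q ∧ IsFull N.Lines Q a → b ∈ Q ∧ IsFull N.Lines Q b := by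
    intro a b w
    induction w with
    | nil => exact id
    | cons hab _ ih => exact fun ha => ih (hQ.full_of_full_of_adj ht hthick ha.1 ha.2 hab)
  have hmem : ∀ y, y ∈ Q := fun y =>
    (propagate x y (N.connected.preconnected x y).some ⟨hx, hfull⟩).1
  obtain ⟨a, b, hab⟩ := N.diam_eq
  have := hQ.2.1 a (hmem a) b (hmem b)
  omega

end IsQuad

end QuadsAreGrids

/-- Every quad of a near hexagon of order `(2,2)` is a
grid-quad, i.e. has order `(2,1)`. -/
theorem quads_are_grids {P : Type*} (N : NearPolygon P 3) (hord : N.hasOrder 2 2)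
    (Q : Set P) (hQ : IsQuad N.Lines Q) :
    QuadHasOrder N.Lines Q 2 1 := by
  have ht : ∀ z, (linesThrough N.Lines z).ncard = 2 + 1 := hord.2
  have hthick : ∀ L ∈ N.Lines, 2 < L.ncard := fun L hL => by rw [hord.1 L hL]; omega
  refine ⟨fun L hL _ => hord.1 L hL, fun x hx => ?_⟩
  obtain ⟨L₀, hL₀, hxL₀, hL₀Q⟩ := hQ.exists_line_not_subset (by norm_num) ht hthick hx
  have hfin : (linesThrough N.Lines x).Finite :=
    Set.finite_of_ncard_ne_zero (by rw [ht x]; omega)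
  have hlt : (linesIn N.Lines Q x).ncard < 2 + 1 :=
    ht x ▸ Set.ncard_lt_ncard ⟨linesIn_subset_linesThrough _ _ _,
      fun h => hL₀Q (h ⟨hL₀, hxL₀⟩).2.1⟩ hfin
  have hge := hQ.two_le_ncard_linesIn hx (hfin.subset (linesIn_subset_linesThrough _ _ _))
  change (linesIn N.Lines Q x).ncard = 1 + 1
  omega
end
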